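/- arXiv:math/0703456 — 2 statements merged into one kernel-verified Lean document; each statement's English description precedes it below -/
import Mathlib

section
/- Let Δ_1, …, Δ_r be a centered proper nef-partition in ℝ^d, and for a nonempty I ⊆ {1, …, r} set Δ^I := Σ_{i∈I} Δ_i (Minkowski sum). Call a nonempty subset I ⊆ {1, …, r} irreducible if 0 lies in the relative interior of Δ^I and no nonempty proper subset I' ⊊ I satisfies that 0 lies in the relative interior of Δ^{I'}. Then any two distinct irreducible subsets of {1, …, r} are disjoint. -/
open Pointwise

noncomputable section

/-- A point of `ℝ^n` all of whose coordinates are integers (a lattice point of `ℤ^n`). -/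
def IsLatticePt {n : ℕ} (x : Fin n → ℝ) : Prop := ∀ k, ∃ m : ℤ, x k = (m : ℝ)

/-- A lattice polytope: the convex hull of finitely many lattice points. -/
def IsLatticePoly {n : ℕ} (P : Set (Fin n → ℝ)) : Prop :=
  ∃ V : Finset (Fin n → ℝ), V.Nonempty ∧ (∀ v ∈ V, IsLatticePt v) ∧
    P = convexHull ℝ (V : Set (Fin n → ℝ))

/-- The standard inner product pairing on `ℝ^n`. -/
def pairR {n : ℕ} (x y : Fin n → ℝ) : ℝ := ∑ k, x k * y k

/-- The dual polytope `P* = {y : ⟨x,y⟩ ≥ -1 ∀ x ∈ P}`. -/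
def dualPoly {n : ℕ} (P : Set (Fin n → ℝ)) : Set (Fin n → ℝ) :=
  {y | ∀ x ∈ P, -1 ≤ pairR x y}

/-- A reflexive polytope: a lattice polytope with `0` in its interior whose dual
polytope is again a lattice polytope. -/
def IsReflexivePoly {n : ℕ} (P : Set (Fin n → ℝ)) : Prop :=
  IsLatticePoly P ∧ (0 : Fin n → ℝ) ∈ interior P ∧ IsLatticePoly (dualPoly P)

/-- The dimension of a polytope: the dimension of the direction of its affine span. -/
def polyDim {n : ℕ} (P : Set (Fin n → ℝ)) : ℕ :=
  Module.finrank ℝ (affineSpan ℝ P).direction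

/-- A (full-dimensional) Gorenstein polytope of index `r`: `rP` has `m` as its unique
interior lattice point and `rP - m` is reflexive. -/
def IsGorensteinPoly {n : ℕ} (P : Set (Fin n → ℝ)) (r : ℕ) (m : Fin n → ℝ) : Prop :=
  IsLatticePoly P ∧ IsLatticePt m ∧
  (∀ x, IsLatticePt x → (x ∈ interior ((r : ℝ) • P) ↔ x = m)) ∧
  IsReflexivePoly ((fun x => x - m) '' ((r : ℝ) • P))

/-- `y` is a point of the lattice dual to the (saturated) lattice `ℤ^n ∩ W` inside `W`. -/
def IsDualLatticePt {n : ℕ} (W : Submodule ℝ (Fin n → ℝ)) (y : Fin n → ℝ) : Prop :=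
  y ∈ W ∧ ∀ x ∈ W, IsLatticePt x → ∃ m : ℤ, pairR x y = (m : ℝ)

/-- Reflexivity of a (possibly lower-dimensional) lattice polytope inside its linear
span: `0` is in the relative interior and the dual polytope taken inside the linear
span is a lattice polytope with respect to the dual lattice. -/
def IsReflexiveIn {n : ℕ} (P : Set (Fin n → ℝ)) : Prop :=
  IsLatticePoly P ∧ (0 : Fin n → ℝ) ∈ intrinsicInterior ℝ P ∧
  ∃ V : Finset (Fin n → ℝ), V.Nonempty ∧
    (∀ v ∈ V, IsDualLatticePt (Submodule.span ℝ P) v) ∧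
    {y | y ∈ Submodule.span ℝ P ∧ ∀ x ∈ P, -1 ≤ pairR x y} =
      convexHull ℝ (V : Set (Fin n → ℝ))

/-- Gorenstein polytope of index `r` (possibly lower-dimensional): `rP` has `m` as its
unique relative-interior lattice point and `rP - m` is reflexive within its span. -/
def IsGorensteinIn {n : ℕ} (P : Set (Fin n → ℝ)) (r : ℕ) (m : Fin n → ℝ) : Prop :=
  IsLatticePoly P ∧ IsLatticePt m ∧
  (∀ x, IsLatticePt x → (x ∈ intrinsicInterior ℝ ((r : ℝ) • P) ↔ x = m)) ∧
  IsReflexiveIn ((fun x => x - m) '' ((r : ℝ) • P))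

/-- The Minkowski sum `Δ 0 + ⋯ + Δ (r-1)` of a family of sets. -/
def minkSum {n r : ℕ} (Δ : Fin r → Set (Fin n → ℝ)) : Set (Fin n → ℝ) :=
  {x | ∃ f : Fin r → (Fin n → ℝ), (∀ i, f i ∈ Δ i) ∧ x = ∑ i, f i}

/-- The Minkowski sum `Σ_{i ∈ I} Δ i`. -/
def minkSumOver {n r : ℕ} (I : Finset (Fin r)) (Δ : Fin r → Set (Fin n → ℝ)) :
    Set (Fin n → ℝ) :=
  {x | ∃ f : Fin r → (Fin n → ℝ), (∀ i ∈ I, f i ∈ Δ i) ∧ x = ∑ i ∈ I, f i}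

/-- The point `x × e_i ∈ ℝ^d × ℝ^r`. -/
def cayleyPt {d r : ℕ} (x : Fin d → ℝ) (i : Fin r) : Fin (d + r) → ℝ :=
  Fin.append x (fun j => if j = i then 1 else 0)

/-- The Cayley polytope `Δ 0 * ⋯ * Δ (r-1) ⊂ ℝ^d × ℝ^r`. -/
def cayley {d r : ℕ} (Δ : Fin r → Set (Fin d → ℝ)) : Set (Fin (d + r) → ℝ) :=
  convexHull ℝ (⋃ i, (fun x => cayleyPt x i) '' Δ i)

/-- `F` is a facet of `P`: a nonempty exposed face of dimension one less. -/
def IsFacetOf {n : ℕ} (F P : Set (Fin n → ℝ)) : Prop :=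
  IsExposed ℝ P F ∧ F.Nonempty ∧ polyDim F + 1 = polyDim P

/-- A special `(r-1)`-simplex of `P`: `r` affinely independent lattice points of `P`
such that every facet of `P` contains exactly `r - 1` of them. -/
def IsSpecialSimplex {n : ℕ} (P : Set (Fin n → ℝ)) (r : ℕ) (v : Fin r → Fin n → ℝ) : Prop :=
  (∀ i, IsLatticePt (v i) ∧ v i ∈ P) ∧ AffineIndependent ℝ v ∧
  ∀ F, IsFacetOf F P → ∃! i, v i ∉ F

/-- `∇_i = {y : ⟨x,y⟩ ≥ -δ_{ij} ∀ x ∈ Δ_j ∀ j}`, the polytopes of the dual nef-partition. -/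
def nefDual {d r : ℕ} (Δ : Fin r → Set (Fin d → ℝ)) (i : Fin r) : Set (Fin d → ℝ) :=
  {y | ∀ j, ∀ x ∈ Δ j, -(if i = j then (1 : ℝ) else 0) ≤ pairR x y}

/-- A centered nef-partition: lattice polytopes containing `0` whose Minkowski sum is a
reflexive polytope with `0` as its unique interior lattice point. -/
def IsCenteredNefPartition {d r : ℕ} (Δ : Fin r → Set (Fin d → ℝ)) : Prop :=
  (∀ i, IsLatticePoly (Δ i) ∧ (0 : Fin d → ℝ) ∈ Δ i) ∧
  IsReflexivePoly (minkSum Δ) ∧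
  ∀ x, IsLatticePt x → x ∈ interior (minkSum Δ) → x = 0

/-- Two centered nef-partitions dual to each other. -/
def AreDualNefPartitions {d r : ℕ} (Δ Nb : Fin r → Set (Fin d → ℝ)) : Prop :=
  IsCenteredNefPartition Δ ∧ IsCenteredNefPartition Nb ∧
  (∀ i, Nb i = nefDual Δ i) ∧ (∀ i, Δ i = nefDual Nb i)

/-- A Gorenstein cone with its distinguished lattice point `nσ`: a full-dimensional cone
generated by finitely many lattice points on the hyperplane `⟨·, nσ⟩ = 1`. -/
def IsGorensteinCone {n : ℕ} (σ : Set (Fin n → ℝ)) (nσ : Fin n → ℝ) : Prop :=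
  IsLatticePt nσ ∧ Submodule.span ℝ σ = ⊤ ∧
  ∃ V : Finset (Fin n → ℝ), V.Nonempty ∧
    (∀ v ∈ V, IsLatticePt v ∧ pairR v nσ = 1) ∧
    σ = {x | ∃ c : (Fin n → ℝ) → ℝ, (∀ v, 0 ≤ c v) ∧ x = ∑ v ∈ V, c v • v}

/-- The dual cone. -/
def dualCone {n : ℕ} (σ : Set (Fin n → ℝ)) : Set (Fin n → ℝ) :=
  {y | ∀ x ∈ σ, 0 ≤ pairR x y}

/-- Integrally closed lattice polytope: every lattice point of `k • P` is a sum of `k`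
lattice points of `P`. -/
def IntegrallyClosed {n : ℕ} (P : Set (Fin n → ℝ)) : Prop :=
  ∀ (k : ℕ) (x : Fin n → ℝ), IsLatticePt x → x ∈ (k : ℝ) • P →
    ∃ v : Fin k → (Fin n → ℝ), (∀ j, IsLatticePt (v j) ∧ v j ∈ P) ∧ x = ∑ j, v j

/-!
Everything reduces to showing that `0 ∈ relint Δ^{I ∩ I'}` whenever `0 ∈ relint Δ^I` and
`0 ∈ relint Δ^{I'}`. For a polytope containing `0` this means that every linear functional which
is nonnegative on it vanishes on it (Stiemke's alternative, a consequence of Farkas' lemma).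

So let `y ≥ 0` on `Δ_i` for all `i ∈ J = I ∩ I'`, and let `x = ∑ x_i` minimize `y` on `Δ`.
By Farkas, `y` is a nonnegative combination of lattice generators `v` of `Δ*` that are active at
`x`, and each `x_i` minimizes each such `v` on `Δ_i`. Since `⟨y, x_i⟩ = 0` for `i ∈ J`, every `v`
with positive weight is nonnegative on the `Δ_i`, `i ∈ J`. Now the nef condition enters: the
minima of a lattice point `v ∈ Δ*` on the `Δ_i` are nonpositive integers with sum `≥ -1`, so at
most one of them is negative. Hence `v` is nonnegative on all `Δ_i` with `i ∈ I`, or on all with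
`i ∈ I'`, and since `0` lies in the relative interior of that Minkowski sum, `v` vanishes on it;
therefore so does `y` on `Δ_i`.
-/

open Filter Topology

section IntrinsicInterior

variable {E : Type*} [NormedAddCommGroup E] [NormedSpace ℝ E] {C : Set E}

theorem zero_mem_intrinsicInterior_iff_mem_nhdsWithin (h0 : (0 : E) ∈ C) :
    (0 : E) ∈ intrinsicInterior ℝ C ↔ C ∈ 𝓝[Submodule.span ℝ C] (0 : E) := by
  have hspan : (affineSpan ℝ C : Set E) = Submodule.span ℝ C := by
    rw [← affineSpan_insert_zero, Set.insert_eq_of_mem h0]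
  rw [← hspan, ← preimage_coe_mem_nhds_subtype (a := ⟨0, subset_affineSpan ℝ C h0⟩),
    ← mem_interior_iff_mem_nhds, mem_intrinsicInterior]
  exact ⟨fun ⟨y, hy, hy0⟩ => (Subtype.ext hy0 : y = ⟨0, _⟩) ▸ hy, fun h => ⟨_, h, rfl⟩⟩

theorem exists_neg_smul_mem_of_zero_mem_intrinsicInterior (h0 : (0 : E) ∈ intrinsicInterior ℝ C)
    {x : E} (hx : x ∈ C) : ∃ δ : ℝ, 0 < δ ∧ -δ • x ∈ C := by
  have hC : C ∈ 𝓝[Submodule.span ℝ C] (0 : E) :=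
    (zero_mem_intrinsicInterior_iff_mem_nhdsWithin (intrinsicInterior_subset h0)).1 h0
  have hline : Tendsto (fun t : ℝ => t • x) (𝓝[<] 0) (𝓝[Submodule.span ℝ C] 0) := by
    refine tendsto_nhdsWithin_of_tendsto_nhds_of_eventually_within _ ?_ ?_
    · exact ((continuous_id.smul continuous_const).tendsto' (0 : ℝ) (0 : E)
        (zero_smul ℝ x)).mono_left nhdsWithin_le_nhds
    · exact Eventually.of_forall fun t => Submodule.smul_mem _ t (Submodule.subset_span hx)
  obtain ⟨t, ht, htx⟩ := ((hline.eventually_mem hC).and self_mem_nhdsWithin).exists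
  exact ⟨-t, neg_pos.2 htx, by simpa using ht⟩

theorem Convex.zero_mem_intrinsicInterior_of_forall_neg_smul_mem [FiniteDimensional ℝ E]
    (hC : Convex ℝ C) (h0 : (0 : E) ∈ C) (h : ∀ x ∈ C, ∃ δ : ℝ, 0 < δ ∧ -δ • x ∈ C) :
    (0 : E) ∈ intrinsicInterior ℝ C := by
  set W := Submodule.span ℝ C
  set C' : Set W := Subtype.val ⁻¹' C
  have hC' : Convex ℝ C' := hC.linear_preimage W.subtype
  have hspan' : affineSpan ℝ C' = ⊤ := by
    refine SetLike.coe_injective ?_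
    rw [← Set.insert_eq_of_mem (show (0 : W) ∈ C' from h0), affineSpan_insert_zero,
      Submodule.span_span_coe_preimage]
    rfl
  obtain ⟨p, hp⟩ := (hC'.interior_nonempty_iff_affineSpan_eq_top).2 hspan'
  obtain ⟨δ, hδ, hq⟩ := h p (interior_subset (s := C') hp)
  have hseg : (0 : W) ∈ openSegment ℝ p (-δ • p) :=
    ⟨δ / (1 + δ), 1 / (1 + δ), by positivity, by positivity, by field_simp; ring, by
      rw [smul_smul, ← add_smul]; field_simp; simp⟩
  have h0' := hC'.openSegment_interior_self_subset_interior hp hq hseg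
  rw [zero_mem_intrinsicInterior_iff_mem_nhdsWithin h0]
  exact preimage_coe_mem_nhds_subtype.1 (mem_interior_iff_mem_nhds.1 h0')

theorem eq_zero_of_forall_nonneg_of_zero_mem_intrinsicInterior
    (h0 : (0 : E) ∈ intrinsicInterior ℝ C) (ℓ : E →ₗ[ℝ] ℝ) (hℓ : ∀ x ∈ C, 0 ≤ ℓ x) :
    ∀ x ∈ C, ℓ x = 0 := by
  intro x hx
  obtain ⟨δ, hδ, hδx⟩ := exists_neg_smul_mem_of_zero_mem_intrinsicInterior h0 hx
  have := hℓ _ hδx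
  rw [map_smul, smul_eq_mul, neg_mul] at this
  nlinarith [hℓ x hx]

end IntrinsicInterior

namespace PointedCone

variable {E : Type*} [AddCommGroup E] [Module ℝ E]

theorem mem_hull_finset_iff {s : Finset E} {x : E} :
    x ∈ hull ℝ (s : Set E) ↔ ∃ c : E → ℝ, (∀ v ∈ s, 0 ≤ c v) ∧ ∑ v ∈ s, c v • v = x := by
  classical
  rw [Submodule.mem_span_finset]
  constructor
  · rintro ⟨f, -, rfl⟩
    exact ⟨fun v => f v, fun v _ => (f v).2, rfl⟩
  · rintro ⟨c, hc, rfl⟩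
    refine ⟨fun v => if hv : v ∈ s then ⟨c v, hc v hv⟩ else 0, fun v hv => ?_,
      Finset.sum_congr rfl fun v hv => ?_⟩
    · by_contra hvs
      exact hv (dif_neg hvs)
    · simp only [dif_pos hv]
      rfl

theorem mem_hull_finset_iff_fintype {s : Finset E} {x : E} :
    x ∈ hull ℝ (s : Set E) ↔ ∃ c : s → ℝ, (∀ v, 0 ≤ c v) ∧ ∑ v, c v • (v : E) = x := by
  have hs : (s : Set E) = Set.range ((↑) : s → E) := by simp
  rw [hs, Submodule.mem_span_range_iff_exists_fun]
  constructor
  · rintro ⟨c, rfl⟩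
    exact ⟨fun v => c v, fun v => (c v).2, rfl⟩
  · rintro ⟨c, hc, rfl⟩
    exact ⟨fun v => ⟨c v, hc v⟩, rfl⟩

theorem exists_mem_hull_erase_of_not_linearIndepOn [DecidableEq E] {s : Finset E}
    (hs : ¬LinearIndepOn ℝ id (s : Set E)) {x : E} (hx : x ∈ hull ℝ (s : Set E)) :
    ∃ b ∈ s, x ∈ hull ℝ (s.erase b : Set E) := by
  obtain ⟨c, hc, rfl⟩ := mem_hull_finset_iff.1 hx
  simp only [linearIndepOn_finset_iff, id, not_forall] at hs
  obtain ⟨g, hg, i, hi, hgi⟩ := hs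
  wlog hpos : 0 < g i generalizing g
  · exact this (-g) (by simp [neg_smul, hg]) (by simpa using hgi)
      (by simpa using lt_of_le_of_ne (not_lt.1 hpos) hgi)
  set P := s.filter (fun v => 0 < g v)
  have hP : P.Nonempty := ⟨i, Finset.mem_filter.2 ⟨hi, hpos⟩⟩
  obtain ⟨b, hbP, hb⟩ := Finset.exists_min_image P (fun v => c v / g v) hP
  obtain ⟨hbs, hgb⟩ := Finset.mem_filter.1 hbP
  set t := c b / g b
  have ht : 0 ≤ t := div_nonneg (hc b hbs) hgb.le
  refine ⟨b, hbs, mem_hull_finset_iff.2 ⟨fun v => c v - t * g v, fun v hv => ?_, ?_⟩⟩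
  · have hvs := Finset.mem_of_mem_erase hv
    rcases lt_or_ge 0 (g v) with hgv | hgv
    · have := hb v (Finset.mem_filter.2 ⟨hvs, hgv⟩)
      rw [le_div_iff₀ hgv] at this
      linarith
    · nlinarith [hc v hvs]
  · have hb0 : c b - t * g b = 0 := by simp only [t]; field_simp; ring
    rw [Finset.sum_erase _ (by simp only [hb0, zero_smul])]
    simp only [sub_smul, Finset.sum_sub_distrib, mul_smul, ← Finset.smul_sum, hg, smul_zero,
      sub_zero]

variable [TopologicalSpace E] [T2Space E] [IsTopologicalAddGroup E] [ContinuousSMul ℝ E]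

theorem isClosed_hull_of_linearIndepOn {s : Finset E} (hs : LinearIndepOn ℝ id (s : Set E)) :
    IsClosed (hull ℝ (s : Set E) : Set E) := by
  have hemb := LinearMap.isClosedEmbedding_of_injective
    (LinearMap.ker_eq_bot.2 (hs.fintypeLinearCombination_injective))
  convert hemb.isClosedMap {c | 0 ≤ c} (isClosed_le continuous_const continuous_id)
  ext x
  simp [mem_hull_finset_iff_fintype, Pi.le_def, Fintype.linearCombination_apply]

theorem isClosed_hull_finset (s : Finset E) : IsClosed (hull ℝ (s : Set E) : Set E) := by
  classical
  induction s using Finset.strongInduction with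
  | H s ih =>
    by_cases hs : LinearIndepOn ℝ id (s : Set E)
    · exact isClosed_hull_of_linearIndepOn hs
    have hunion : (hull ℝ (s : Set E) : Set E) = ⋃ b ∈ s, (hull ℝ (s.erase b : Set E) : Set E) :=
      Set.Subset.antisymm
        (fun x hx => by simpa using exists_mem_hull_erase_of_not_linearIndepOn hs hx)
        (Set.iUnion₂_subset fun b _ => Submodule.span_mono (by simp))
    rw [hunion]
    exact isClosed_biUnion_finset fun b hb => ih _ (Finset.erase_ssubset hb)

variable [LocallyConvexSpace ℝ E]

theorem exists_strongDual_nonneg_of_notMem_hull {s : Set E} (hs : s.Finite) {z : E}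
    (hz : z ∉ hull ℝ s) : ∃ f : StrongDual ℝ E, (∀ v ∈ s, 0 ≤ f v) ∧ f z < 0 := by
  have hclosed := isClosed_hull_finset hs.toFinset
  rw [hs.coe_toFinset] at hclosed
  obtain ⟨f, hf, hfz⟩ := ProperCone.hyperplane_separation_point ⟨hull ℝ s, hclosed⟩ hz
  exact ⟨f, fun v hv => hf v (subset_hull hv), hfz⟩

end PointedCone

section ConicHull

variable {E : Type*} [AddCommGroup E] [Module ℝ E] {C : Set E}

theorem Convex.exists_pos_smul_mem_of_mem_hull (hC : Convex ℝ C) (h0 : (0 : E) ∈ C) {z : E}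
    (hz : z ∈ PointedCone.hull ℝ C) : ∃ δ : ℝ, 0 < δ ∧ δ • z ∈ C := by
  induction hz using Submodule.span_induction with
  | mem x hx => exact ⟨1, one_pos, by rwa [one_smul]⟩
  | zero => exact ⟨1, one_pos, by rwa [smul_zero]⟩
  | add x y _ _ hx hy =>
    obtain ⟨a, ha, hax⟩ := hx
    obtain ⟨b, hb, hby⟩ := hy
    refine ⟨a * b / (a + b), by positivity, ?_⟩
    convert hC hax hby (a := b / (a + b)) (b := a / (a + b)) (by positivity) (by positivity)
      (by field_simp; ring) using 1
    simp only [smul_add, smul_smul]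
    congr 2 <;> field_simp
  | smul a x _ hx =>
    obtain ⟨δ, hδ, hδx⟩ := hx
    rcases eq_or_ne a 0 with rfl | ha
    · exact ⟨1, one_pos, by rwa [zero_smul, smul_zero]⟩
    have ha' : (0 : ℝ) < a := lt_of_le_of_ne a.2 (fun h => ha (Subtype.ext h.symm))
    refine ⟨δ / a, div_pos hδ ha', ?_⟩
    rwa [← Nonneg.coe_smul (a := a), smul_smul, div_mul_cancel₀ δ ha'.ne']

end ConicHull

section Stiemke

variable {E : Type*} [NormedAddCommGroup E] [NormedSpace ℝ E] [FiniteDimensional ℝ E]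

theorem zero_mem_intrinsicInterior_convexHull_of_nonneg_imp_eq_zero {F : Set E} (hF : F.Finite)
    (h0 : (0 : E) ∈ convexHull ℝ F)
    (h : ∀ f : StrongDual ℝ E, (∀ x ∈ convexHull ℝ F, 0 ≤ f x) → ∀ x ∈ convexHull ℝ F, f x = 0) :
    (0 : E) ∈ intrinsicInterior ℝ (convexHull ℝ F) := by
  refine (convex_convexHull ℝ F).zero_mem_intrinsicInterior_of_forall_neg_smul_mem h0 fun x hx => ?_
  have hneg : -x ∈ PointedCone.hull ℝ F := by
    by_contra hnx
    obtain ⟨f, hfF, hfx⟩ := PointedCone.exists_strongDual_nonneg_of_notMem_hull hF hnx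
    have hfC : ∀ y ∈ convexHull ℝ F, 0 ≤ f y := fun y hy =>
      convexHull_min hfF (convex_halfSpace_ge f.toLinearMap.isLinear 0) hy
    rw [map_neg, h f hfC x hx, neg_zero] at hfx
    exact lt_irrefl 0 hfx
  obtain ⟨δ, hδ, hδx⟩ := (convex_convexHull ℝ F).exists_pos_smul_mem_of_mem_hull h0
    (Submodule.span_mono (subset_convexHull ℝ F) hneg)
  exact ⟨δ, hδ, by rwa [neg_smul, ← smul_neg]⟩

end Stiemke

section DotProduct

variable {n : ℕ}

theorem pairR_eq_dotProduct (x y : Fin n → ℝ) : pairR x y = y ⬝ᵥ x := dotProduct_comm x y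

theorem mem_dualPoly_iff {P : Set (Fin n → ℝ)} {y : Fin n → ℝ} :
    y ∈ dualPoly P ↔ ∀ x ∈ P, -1 ≤ y ⬝ᵥ x := by
  simp only [dualPoly, Set.mem_ofPred_eq, pairR_eq_dotProduct]

theorem StrongDual.exists_dotProduct_eq (f : StrongDual ℝ (Fin n → ℝ)) :
    ∃ y : Fin n → ℝ, ∀ x, f x = y ⬝ᵥ x :=
  ⟨(dotProductEquiv ℝ (Fin n)).symm f.toLinearMap, fun x => by
    rw [← dotProductEquiv_apply_apply, LinearEquiv.apply_symm_apply]; rfl⟩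

theorem IsLatticePt.exists_dotProduct_eq_intCast {x y : Fin n → ℝ} (hx : IsLatticePt x)
    (hy : IsLatticePt y) : ∃ z : ℤ, x ⬝ᵥ y = z := by
  choose a ha using hx
  choose b hb using hy
  exact ⟨∑ k, a k * b k, by simp [dotProduct, ha, hb]⟩

theorem IsLatticePoly.exists_isLatticePt_isMinOn {P : Set (Fin n → ℝ)} (hP : IsLatticePoly P)
    (y : Fin n → ℝ) : ∃ u ∈ P, IsLatticePt u ∧ IsMinOn (y ⬝ᵥ ·) P u := by
  obtain ⟨V, hVne, hVlat, rfl⟩ := hP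
  obtain ⟨u, hu, hmin⟩ := V.exists_min_image (y ⬝ᵥ ·) hVne
  refine ⟨u, subset_convexHull ℝ _ hu, hVlat u hu, isMinOn_iff.2 fun x hx => ?_⟩
  exact convexHull_min (fun v hv => hmin v hv)
    (convex_halfSpace_ge (dotProductBilin ℝ ℝ y).isLinear (y ⬝ᵥ u)) hx

theorem dualPoly_dualPoly_subset {P : Set (Fin n → ℝ)} (hconv : Convex ℝ P) (hclosed : IsClosed P)
    (h0 : (0 : Fin n → ℝ) ∈ P) : dualPoly (dualPoly P) ⊆ P := by
  intro x hx
  by_contra hxP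
  obtain ⟨f, u, hfx, hfP⟩ := geometric_hahn_banach_point_closed hconv hclosed hxP
  obtain ⟨w, hw⟩ := StrongDual.exists_dotProduct_eq f
  have hu : u < 0 := by simpa using hfP 0 h0
  have hscale : ∀ z, ((-u⁻¹) • w) ⬝ᵥ z = -(f z / u) := fun z => by
    rw [smul_dotProduct, ← hw, smul_eq_mul, div_eq_inv_mul, neg_mul]
  have hwP : (-u⁻¹) • w ∈ dualPoly P := mem_dualPoly_iff.2 fun z hz => by
    rw [hscale, neg_le_neg_iff]
    exact (div_le_one_of_neg hu).2 (hfP z hz).le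
  have := mem_dualPoly_iff.1 hx _ hwP
  rw [dotProduct_comm, hscale, neg_le_neg_iff, div_le_one_of_neg hu] at this
  exact absurd hfx this.not_gt

theorem mem_of_forall_neg_one_le_dotProduct {P : Set (Fin n → ℝ)} (hconv : Convex ℝ P)
    (hclosed : IsClosed P) (h0 : (0 : Fin n → ℝ) ∈ P) {Vd : Finset (Fin n → ℝ)}
    (hVd : dualPoly P = convexHull ℝ ↑Vd) {z : Fin n → ℝ} (hz : ∀ v ∈ Vd, -1 ≤ v ⬝ᵥ z) :
    z ∈ P := by
  refine dualPoly_dualPoly_subset hconv hclosed h0 (mem_dualPoly_iff.2 fun y hy => ?_)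
  rw [hVd] at hy
  refine convexHull_min (fun v hv => ?_) (convex_halfSpace_ge (dotProductBilin ℝ ℝ z).isLinear _) hy
  rw [Set.mem_ofPred_eq, dotProductBilin_apply_apply, dotProduct_comm]
  exact hz v hv

theorem exists_pos_add_smul_mem {P : Set (Fin n → ℝ)} (hconv : Convex ℝ P)
    (hclosed : IsClosed P) (h0 : (0 : Fin n → ℝ) ∈ P) {Vd : Finset (Fin n → ℝ)}
    (hVd : dualPoly P = convexHull ℝ ↑Vd) {x w : Fin n → ℝ} (hx : x ∈ P)
    (hw : ∀ v ∈ Vd, v ⬝ᵥ x = -1 → 0 ≤ v ⬝ᵥ w) : ∃ ε : ℝ, 0 < ε ∧ x + ε • w ∈ P := by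
  have hline : ∀ v : Fin n → ℝ, ∀ ε : ℝ, v ⬝ᵥ (x + ε • w) = v ⬝ᵥ x + ε * v ⬝ᵥ w := fun v ε => by
    rw [dotProduct_add, dotProduct_smul, smul_eq_mul]
  have hfeasible : ∀ᶠ ε in 𝓝[>] (0 : ℝ), ∀ v ∈ Vd, -1 ≤ v ⬝ᵥ (x + ε • w) := by
    refine (Filter.eventually_all_finset Vd).2 fun v hv => ?_
    have hvx : -1 ≤ v ⬝ᵥ x :=
      mem_dualPoly_iff.1 (hVd ▸ subset_convexHull ℝ _ hv : v ∈ dualPoly P) x hx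
    rcases hvx.eq_or_lt with hact | hlt
    · filter_upwards [self_mem_nhdsWithin] with ε hε
      rw [hline, ← hact]
      nlinarith [hw v hv hact.symm, Set.mem_Ioi.1 hε]
    · have hcont : Tendsto (fun ε : ℝ => v ⬝ᵥ x + ε * v ⬝ᵥ w) (𝓝 0) (𝓝 (v ⬝ᵥ x)) := by
        simpa using (tendsto_const_nhds (x := v ⬝ᵥ x)).add
          ((tendsto_id (x := 𝓝 (0 : ℝ))).mul_const (v ⬝ᵥ w))
      filter_upwards [nhdsWithin_le_nhds (hcont.eventually (lt_mem_nhds hlt))] with ε hε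
      rw [hline]
      exact hε.le
  obtain ⟨ε, hε, hεpos⟩ := (hfeasible.and self_mem_nhdsWithin).exists
  exact ⟨ε, hεpos, mem_of_forall_neg_one_le_dotProduct hconv hclosed h0 hVd hε⟩

theorem mem_hull_of_isMinOn {P : Set (Fin n → ℝ)} (hconv : Convex ℝ P)
    (hclosed : IsClosed P) (h0 : (0 : Fin n → ℝ) ∈ P) {Vd : Finset (Fin n → ℝ)}
    (hVd : dualPoly P = convexHull ℝ ↑Vd) {x y : Fin n → ℝ} (hx : x ∈ P)
    (hmin : IsMinOn (y ⬝ᵥ ·) P x) :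
    y ∈ PointedCone.hull ℝ (↑(Vd.filter (· ⬝ᵥ x = -1)) : Set (Fin n → ℝ)) := by
  by_contra hy
  obtain ⟨f, hfA, hfy⟩ :=
    PointedCone.exists_strongDual_nonneg_of_notMem_hull (Finset.finite_toSet _) hy
  obtain ⟨w, hw⟩ := f.exists_dotProduct_eq
  obtain ⟨ε, hε, hxε⟩ := exists_pos_add_smul_mem hconv hclosed h0 hVd hx fun v hv hvx => by
    rw [dotProduct_comm, ← hw]
    exact hfA v (by simp [hv, hvx])
  have := isMinOn_iff.1 hmin _ hxε
  rw [dotProduct_add, dotProduct_smul, smul_eq_mul, dotProduct_comm y w, ← hw] at this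
  nlinarith

end DotProduct

section NefPartition

variable {d r : ℕ} {Δ : Fin r → Set (Fin d → ℝ)}

theorem minkSumOver_eq_sum (K : Finset (Fin r)) : minkSumOver K Δ = ∑ i ∈ K, Δ i := by
  ext x
  rw [Set.mem_finsetSum]
  exact ⟨fun ⟨f, hf, hx⟩ => ⟨f, fun hi => hf _ hi, hx.symm⟩,
    fun ⟨f, hf, hx⟩ => ⟨f, fun _ hi => hf hi, hx.symm⟩⟩

theorem exists_finite_convexHull_eq_minkSumOver (hΔ : ∀ i, IsLatticePoly (Δ i))
    (K : Finset (Fin r)) :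
    ∃ F : Set (Fin d → ℝ), F.Finite ∧ minkSumOver K Δ = convexHull ℝ F := by
  choose V hV using hΔ
  refine ⟨∑ i ∈ K, (V i : Set (Fin d → ℝ)), ?_, ?_⟩
  · exact Finset.sum_induction _ Set.Finite (fun _ _ => Set.Finite.add) Set.finite_zero
      fun i _ => (V i).finite_toSet
  · rw [minkSumOver_eq_sum, convexHull_sum]
    exact Finset.sum_congr rfl fun i _ => (hV i).2.2

theorem subset_minkSumOver (h0 : ∀ i, (0 : Fin d → ℝ) ∈ Δ i) {K : Finset (Fin r)} {i : Fin r}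
    (hi : i ∈ K) : Δ i ⊆ minkSumOver K Δ := by
  intro x hx
  refine ⟨Pi.single i x, fun j _ => ?_, by rw [Finset.sum_pi_single', if_pos hi]⟩
  rcases eq_or_ne j i with rfl | hji
  · simpa using hx
  · simpa [Pi.single_apply, hji] using h0 j

theorem isMinOn_of_isMinOn_minkSum {y : Fin d → ℝ} {x : Fin r → Fin d → ℝ}
    (hx : ∀ j, x j ∈ Δ j) (hmin : IsMinOn (y ⬝ᵥ ·) (minkSum Δ) (∑ j, x j)) (i : Fin r) :
    IsMinOn (y ⬝ᵥ ·) (Δ i) (x i) := by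
  refine isMinOn_iff.2 fun z hz => ?_
  have hmem : ∑ j, (x j + (Pi.single i (z - x i) : Fin r → Fin d → ℝ) j) ∈ minkSum Δ := by
    refine ⟨_, fun j => ?_, rfl⟩
    rcases eq_or_ne j i with rfl | hji
    · simpa using hz
    · simpa [Pi.single_apply, hji] using hx j
  have := isMinOn_iff.1 hmin _ hmem
  simp only [Finset.sum_add_distrib, Finset.sum_pi_single', Finset.mem_univ,
    if_true, dotProduct_add, dotProduct_sub] at this
  linarith

theorem eq_zero_of_forall_nonneg_of_zero_mem_intrinsicInterior_minkSumOver
    (h0 : ∀ i, (0 : Fin d → ℝ) ∈ Δ i) {K : Finset (Fin r)}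
    (hK : (0 : Fin d → ℝ) ∈ intrinsicInterior ℝ (minkSumOver K Δ)) {v : Fin d → ℝ}
    (hv : ∀ i ∈ K, ∀ x ∈ Δ i, 0 ≤ v ⬝ᵥ x) : ∀ i ∈ K, ∀ x ∈ Δ i, v ⬝ᵥ x = 0 := by
  have hC : ∀ x ∈ minkSumOver K Δ, v ⬝ᵥ x = 0 :=
    eq_zero_of_forall_nonneg_of_zero_mem_intrinsicInterior hK (dotProductBilin ℝ ℝ v)
      fun x ⟨f, hf, hx⟩ => by
        rw [dotProductBilin_apply_apply, hx, dotProduct_sum]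
        exact Finset.sum_nonneg fun i hi => hv i hi _ (hf i hi)
  exact fun i hi x hx => hC x (subset_minkSumOver h0 hi hx)

theorem IsCenteredNefPartition.nonneg_or_nonneg (h : IsCenteredNefPartition Δ)
    {v : Fin d → ℝ} (hv : IsLatticePt v) (hvΔ : v ∈ dualPoly (minkSum Δ)) {i j : Fin r}
    (hij : i ≠ j) : (∀ x ∈ Δ i, 0 ≤ v ⬝ᵥ x) ∨ (∀ x ∈ Δ j, 0 ≤ v ⬝ᵥ x) := by
  choose u hu hulat humin using fun k => (h.1 k).1.exists_isLatticePt_isMinOn v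
  have hnonpos : ∀ k, v ⬝ᵥ u k ≤ 0 := fun k => by
    simpa using isMinOn_iff.1 (humin k) 0 (h.1 k).2
  have hsum : -1 ≤ ∑ k, v ⬝ᵥ u k := by
    rw [← dotProduct_sum]
    exact mem_dualPoly_iff.1 hvΔ _ ⟨u, hu, rfl⟩
  have hpair : -1 ≤ v ⬝ᵥ u i + v ⬝ᵥ u j := by
    have hsplit := Finset.sum_sdiff (Finset.subset_univ {i, j}) (f := fun k => v ⬝ᵥ u k)
    rw [Finset.sum_pair hij] at hsplit
    linarith [Finset.sum_nonpos fun k (_ : k ∈ Finset.univ \ {i, j}) => hnonpos k]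
  obtain ⟨a, ha⟩ := IsLatticePt.exists_dotProduct_eq_intCast hv (hulat i)
  obtain ⟨b, hb⟩ := IsLatticePt.exists_dotProduct_eq_intCast hv (hulat j)
  have hi0 := hnonpos i
  have hj0 := hnonpos j
  rw [ha] at hi0 hpair
  rw [hb] at hj0 hpair
  have hab : a = 0 ∨ b = 0 := by
    have : (-1 : ℤ) ≤ a + b := by exact_mod_cast hpair
    have : a ≤ 0 := by exact_mod_cast hi0
    have : b ≤ 0 := by exact_mod_cast hj0
    omega
  refine hab.imp (fun ha0 x hx => ?_) (fun hb0 x hx => ?_)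
  · simpa [ha, ha0] using isMinOn_iff.1 (humin i) x hx
  · simpa [hb, hb0] using isMinOn_iff.1 (humin j) x hx

theorem IsCenteredNefPartition.dotProduct_eq_zero_of_mem_dualPoly (h : IsCenteredNefPartition Δ)
    {I I' : Finset (Fin r)} (hI : (0 : Fin d → ℝ) ∈ intrinsicInterior ℝ (minkSumOver I Δ))
    (hI' : (0 : Fin d → ℝ) ∈ intrinsicInterior ℝ (minkSumOver I' Δ)) {v : Fin d → ℝ}
    (hv : IsLatticePt v) (hvΔ : v ∈ dualPoly (minkSum Δ))
    (hvJ : ∀ i ∈ I ∩ I', ∀ x ∈ Δ i, 0 ≤ v ⬝ᵥ x) : ∀ i ∈ I ∩ I', ∀ x ∈ Δ i, v ⬝ᵥ x = 0 := by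
  have hΔ0 := fun i => (h.1 i).2
  by_cases hvI : ∀ i ∈ I, ∀ x ∈ Δ i, 0 ≤ v ⬝ᵥ x
  · exact fun i hi => eq_zero_of_forall_nonneg_of_zero_mem_intrinsicInterior_minkSumOver hΔ0 hI hvI
      i (Finset.mem_inter.1 hi).1
  push Not at hvI
  obtain ⟨i₀, hi₀, x₀, hx₀, hneg⟩ := hvI
  have hi₀' : i₀ ∉ I' := fun hi₀' =>
    (hvJ i₀ (Finset.mem_inter.2 ⟨hi₀, hi₀'⟩) x₀ hx₀).not_gt hneg
  have hvI' : ∀ i ∈ I', ∀ x ∈ Δ i, 0 ≤ v ⬝ᵥ x := fun i hi =>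
    (h.nonneg_or_nonneg hv hvΔ (ne_of_mem_of_not_mem hi hi₀').symm).resolve_left
      fun hpos => (hpos x₀ hx₀).not_gt hneg
  exact fun i hi => eq_zero_of_forall_nonneg_of_zero_mem_intrinsicInterior_minkSumOver hΔ0 hI' hvI'
    i (Finset.mem_inter.1 hi).2

theorem IsCenteredNefPartition.exists_common_minimizers (h : IsCenteredNefPartition Δ)
    (y : Fin d → ℝ) :
    ∃ (x : Fin r → Fin d → ℝ) (A : Finset (Fin d → ℝ)) (c : (Fin d → ℝ) → ℝ),
      (∀ i, x i ∈ Δ i) ∧ (∀ i, IsMinOn (y ⬝ᵥ ·) (Δ i) (x i)) ∧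
      (∀ v ∈ A, IsLatticePt v ∧ v ∈ dualPoly (minkSum Δ) ∧ ∀ i, IsMinOn (v ⬝ᵥ ·) (Δ i) (x i)) ∧
      (∀ v ∈ A, 0 ≤ c v) ∧ ∑ v ∈ A, c v • v = y := by
  obtain ⟨⟨V, -, -, hVeq⟩, hint, Vd, -, hVdlat, hVd⟩ := h.2.1
  have hcompact : IsCompact (minkSum Δ) := hVeq ▸ V.finite_toSet.isCompact_convexHull ℝ
  have hconv : Convex ℝ (minkSum Δ) := hVeq ▸ convex_convexHull ℝ _
  have h0 : (0 : Fin d → ℝ) ∈ minkSum Δ := interior_subset hint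
  obtain ⟨-, ⟨x, hx, rfl⟩, hmin⟩ := hcompact.exists_isMinOn ⟨0, h0⟩
    (dotProductBilin ℝ ℝ y).continuous_of_finiteDimensional.continuousOn
  obtain ⟨c, hc, hyc⟩ := PointedCone.mem_hull_finset_iff.1
    (mem_hull_of_isMinOn hconv hcompact.isClosed h0 hVd ⟨x, hx, rfl⟩ hmin)
  refine ⟨x, _, c, hx, isMinOn_of_isMinOn_minkSum hx hmin, fun v hv => ?_, hc, hyc⟩
  obtain ⟨hvVd, hvx⟩ := Finset.mem_filter.1 hv
  have hvΔ : v ∈ dualPoly (minkSum Δ) := hVd ▸ subset_convexHull ℝ _ hvVd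
  refine ⟨hVdlat v hvVd, hvΔ, isMinOn_of_isMinOn_minkSum hx (isMinOn_iff.2 fun z hz => ?_)⟩
  rw [hvx]
  exact mem_dualPoly_iff.1 hvΔ z hz

theorem IsCenteredNefPartition.dotProduct_eq_zero_of_nonneg (h : IsCenteredNefPartition Δ)
    {I I' : Finset (Fin r)} (hI : (0 : Fin d → ℝ) ∈ intrinsicInterior ℝ (minkSumOver I Δ))
    (hI' : (0 : Fin d → ℝ) ∈ intrinsicInterior ℝ (minkSumOver I' Δ)) {y : Fin d → ℝ}
    (hy : ∀ i ∈ I ∩ I', ∀ x ∈ Δ i, 0 ≤ y ⬝ᵥ x) : ∀ i ∈ I ∩ I', ∀ x ∈ Δ i, y ⬝ᵥ x = 0 := by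
  have hΔ0 := fun i => (h.1 i).2
  obtain ⟨x, A, c, hx, hymin, hA, hc, hyc⟩ := h.exists_common_minimizers y
  have hactive : ∀ v ∈ A, c v ≠ 0 → ∀ i ∈ I ∩ I', ∀ z ∈ Δ i, 0 ≤ v ⬝ᵥ z := by
    intro v hv hcv i hi z hz
    have hyx : y ⬝ᵥ x i = 0 :=
      le_antisymm (by simpa using isMinOn_iff.1 (hymin i) 0 (hΔ0 i)) (hy i hi _ (hx i))
    have hle : ∀ w ∈ A, c w * (w ⬝ᵥ x i) ≤ 0 := fun w hw =>
      mul_nonpos_of_nonneg_of_nonpos (hc w hw)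
        (by simpa using isMinOn_iff.1 ((hA w hw).2.2 i) 0 (hΔ0 i))
    have hsum : ∑ w ∈ A, c w * (w ⬝ᵥ x i) = 0 := by
      rw [← hyx, ← hyc, sum_dotProduct]
      simp only [smul_dotProduct, smul_eq_mul]
    have hvx : v ⬝ᵥ x i = 0 :=
      (mul_eq_zero.1 ((Finset.sum_eq_zero_iff_of_nonpos hle).1 hsum v hv)).resolve_left hcv
    simpa [hvx] using isMinOn_iff.1 ((hA v hv).2.2 i) z hz
  intro i hi z hz
  rw [← hyc, sum_dotProduct]
  refine Finset.sum_eq_zero fun v hv => ?_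
  rw [smul_dotProduct, smul_eq_mul]
  rcases eq_or_ne (c v) 0 with hcv | hcv
  · rw [hcv, zero_mul]
  · rw [h.dotProduct_eq_zero_of_mem_dualPoly hI hI' (hA v hv).1 (hA v hv).2.1
      (hactive v hv hcv) i hi z hz, mul_zero]

theorem IsCenteredNefPartition.zero_mem_intrinsicInterior_minkSumOver_inter
    (h : IsCenteredNefPartition Δ) {I I' : Finset (Fin r)}
    (hI : (0 : Fin d → ℝ) ∈ intrinsicInterior ℝ (minkSumOver I Δ))
    (hI' : (0 : Fin d → ℝ) ∈ intrinsicInterior ℝ (minkSumOver I' Δ)) :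
    (0 : Fin d → ℝ) ∈ intrinsicInterior ℝ (minkSumOver (I ∩ I') Δ) := by
  have hΔ0 := fun i => (h.1 i).2
  obtain ⟨F, hF, hFeq⟩ := exists_finite_convexHull_eq_minkSumOver (fun i => (h.1 i).1) (I ∩ I')
  have h0 : (0 : Fin d → ℝ) ∈ minkSumOver (I ∩ I') Δ := ⟨0, fun i _ => hΔ0 i, by simp⟩
  rw [hFeq] at h0 ⊢
  refine zero_mem_intrinsicInterior_convexHull_of_nonneg_imp_eq_zero hF h0 fun f hf x hx => ?_
  obtain ⟨y, hy⟩ := f.exists_dotProduct_eq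
  rw [← hFeq] at hf hx
  obtain ⟨g, hg, rfl⟩ := hx
  have hyJ := h.dotProduct_eq_zero_of_nonneg hI hI' fun i hi z hz => by
    rw [← hy]
    exact hf z (subset_minkSumOver hΔ0 hi hz)
  rw [hy, dotProduct_sum]
  exact Finset.sum_eq_zero fun i hi => hyJ i hi _ (hg i hi)

end NefPartition

theorem irreducible_subsets_disjoint_general {d r : ℕ}
    (Δ : Fin r → Set (Fin d → ℝ))
    (h : IsCenteredNefPartition Δ) :
    ∀ I I' : Finset (Fin r),
      (I.Nonempty ∧ (0 : Fin d → ℝ) ∈ intrinsicInterior ℝ (minkSumOver I Δ) ∧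
        ∀ I'' : Finset (Fin r), I'' ⊂ I → I''.Nonempty →
          (0 : Fin d → ℝ) ∉ intrinsicInterior ℝ (minkSumOver I'' Δ)) →
      (I'.Nonempty ∧ (0 : Fin d → ℝ) ∈ intrinsicInterior ℝ (minkSumOver I' Δ) ∧
        ∀ I'' : Finset (Fin r), I'' ⊂ I' → I''.Nonempty →
          (0 : Fin d → ℝ) ∉ intrinsicInterior ℝ (minkSumOver I'' Δ)) →
      I ≠ I' → Disjoint I I' := by
  rintro I I' ⟨-, hI, hIirr⟩ ⟨-, hI', hI'irr⟩ hne
  by_contra hdis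
  have hJne : (I ∩ I').Nonempty := Finset.not_disjoint_iff_nonempty_inter.1 hdis
  have hJ := h.zero_mem_intrinsicInterior_minkSumOver_inter hI hI'
  by_cases hJI : I ∩ I' = I
  · have hII' : I ⊂ I' := Finset.ssubset_iff_subset_ne.2 ⟨Finset.inter_eq_left.1 hJI, hne⟩
    exact hI'irr I hII' (hJI ▸ hJne) (hJI ▸ hJ)
  · exact hIirr _ (Finset.ssubset_iff_subset_ne.2 ⟨Finset.inter_subset_left, hJI⟩) hJne hJ

/-- For a centered proper nef-partition, any two distinct irreducible
subsets of `{1, …, r}` are disjoint; here `I` is irreducible if `0` lies in the relative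
interior of `Δ^I` and of `Δ^{I'}` for no nonempty proper subset `I' ⊊ I`. -/
theorem irreducible_subsets_disjoint {d r : ℕ}
    (Δ : Fin r → Set (Fin d → ℝ))
    (h : IsCenteredNefPartition Δ)
    (hproper : ∀ i, 0 < polyDim (Δ i)) :
    ∀ I I' : Finset (Fin r),
      (I.Nonempty ∧ (0 : Fin d → ℝ) ∈ intrinsicInterior ℝ (minkSumOver I Δ) ∧
        ∀ I'' : Finset (Fin r), I'' ⊂ I → I''.Nonempty →
          (0 : Fin d → ℝ) ∉ intrinsicInterior ℝ (minkSumOver I'' Δ)) →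
      (I'.Nonempty ∧ (0 : Fin d → ℝ) ∈ intrinsicInterior ℝ (minkSumOver I' Δ) ∧
        ∀ I'' : Finset (Fin r), I'' ⊂ I' → I''.Nonempty →
          (0 : Fin d → ℝ) ∉ intrinsicInterior ℝ (minkSumOver I'' Δ)) →
      I ≠ I' → Disjoint I I' :=
  irreducible_subsets_disjoint_general Δ h
end
end

section
/- Let Δ_1, …, Δ_r be a centered proper nef-partition in ℝ^d (so each Δ_i is a lattice polytope of positive dimension containing 0, and Δ_1 + ⋯ + Δ_r is a d-dimensional reflexive polytope with 0 as its unique interior lattice point). Then r ≤ 2d. -/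
open Pointwise

noncomputable section

/-!
Choose a nonzero lattice point `v i ∈ Δ i`. If `∑ aᵢ vᵢ = 0`, then `w = ∑ aᵢ⁺ vᵢ = ∑ aᵢ⁻ vᵢ`
pairs nonnegatively with every vertex `u` of the dual of `Δ = ∑ Δᵢ`: the pairings are integers
and `vᵢ + vⱼ ∈ Δ` for `i ≠ j`, so at most one `vᵢ` pairs negatively with `u`, and one of the two
expressions for `w` does not involve it. Hence the whole ray `ℝ≥0 • w` lies in the bounded
polytope `Δ`, so `w = 0`. The relations among the `vᵢ` therefore form a subspace of `ℝʳ` closed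
under positive parts and containing no coordinate vector; such a subspace has dimension at most
`r / 2`, while the space of relations has dimension at least `r - d`.
-/

section VectorSublattice

variable {𝕜 ι : Type*} [Field 𝕜]

def IsDeterminingSet (K : Submodule 𝕜 (ι → 𝕜)) (P : Finset ι) : Prop :=
  ∀ a ∈ K, (∀ i ∈ P, a i = 0) → a = 0

variable {K : Submodule 𝕜 (ι → 𝕜)} {P : Finset ι}

lemma finrank_le_card_of_isDeterminingSet [Fintype ι] (hP : IsDeterminingSet K P) :
    Module.finrank 𝕜 K ≤ P.card := by
  let restrict : K →ₗ[𝕜] (P → 𝕜) := (LinearMap.funLeft 𝕜 𝕜 ((↑) : P → ι)).comp K.subtype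
  have hinj : Function.Injective restrict := by
    rw [← LinearMap.ker_eq_bot, LinearMap.ker_eq_bot']
    exact fun a ha => Subtype.ext <| hP a a.2 fun i hi => congrFun ha ⟨i, hi⟩
  simpa using LinearMap.finrank_le_finrank_of_injective hinj

variable [LinearOrder 𝕜]

lemma exists_pos_notMem_of_nonneg [DecidableEq ι] {c : ι → 𝕜} (hc0 : 0 ≤ c) {p : ι}
    (hc : c ≠ Pi.single p 1) (hcp : c p = 1) (hcq : ∀ q ∈ P.erase p, c q = 0) :
    ∃ i ∉ P, 0 < c i := by
  by_contra! hle
  refine hc (funext fun i => ?_)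
  rcases eq_or_ne i p with rfl | hip
  · simp [hcp]
  · rw [Pi.single_eq_of_ne hip]
    by_cases hi : i ∈ P
    · exact hcq i (Finset.mem_erase.2 ⟨hip, hi⟩)
    · exact le_antisymm (hle i hi) (hc0 i)

variable [IsStrictOrderedRing 𝕜]

lemma inf_mem_of_forall_posPart_mem (hK : ∀ a ∈ K, a⁺ ∈ K) {a b : ι → 𝕜} (ha : a ∈ K)
    (hb : b ∈ K) : a ⊓ b ∈ K := by
  rw [inf_eq_sub_posPart_sub]
  exact K.sub_mem ha (hK _ (K.sub_mem ha hb))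

lemma exists_nonneg_mem_of_minimal_isDeterminingSet [DecidableEq ι]
    (hK : ∀ a ∈ K, a⁺ ∈ K) (hP : Minimal (IsDeterminingSet K) P) {p : ι} (hp : p ∈ P) :
    ∃ c ∈ K, 0 ≤ c ∧ c p = 1 ∧ ∀ q ∈ P.erase p, c q = 0 := by
  have hnot : ¬ IsDeterminingSet K (P.erase p) := hP.not_prop_of_lt (Finset.erase_ssubset hp)
  simp only [IsDeterminingSet, not_forall] at hnot
  obtain ⟨a, ha, hzero, hne⟩ := hnot
  have hap : a p ≠ 0 := fun hap => hne <| hP.prop a ha fun i hi => by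
    rcases eq_or_ne i p with rfl | hip
    · exact hap
    · exact hzero i (Finset.mem_erase.2 ⟨hip, hi⟩)
  refine ⟨((a p)⁻¹ • a)⁺, hK _ (K.smul_mem _ ha), posPart_nonneg _, ?_, fun q hq => ?_⟩
  · simp [hap]
  · simp [hzero q hq]

theorem two_mul_finrank_le_card_of_forall_posPart_mem [Fintype ι] [DecidableEq ι]
    (hK : ∀ a ∈ K, a⁺ ∈ K) (hsingle : ∀ i, Pi.single i 1 ∉ K) :
    2 * Module.finrank 𝕜 K ≤ Fintype.card ι := by
  obtain ⟨P, hP⟩ := exists_minimal_of_wellFoundedLT (IsDeterminingSet K)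
    ⟨Finset.univ, fun a _ h => funext fun i => h i (Finset.mem_univ i)⟩
  -- Each `p ∈ P` carries `c p ≥ 0` in `K` vanishing on `P \ {p}` and positive at some `o p ∉ P`;
  -- `c p ⊓ c q` vanishes on `P`, so the `o p` are distinct.
  choose! c hcK hc0 hcp hcq using
    fun p (hp : p ∈ P) => exists_nonneg_mem_of_minimal_isDeterminingSet hK hP hp
  choose! o hoP hco using fun p (hp : p ∈ P) =>
    exists_pos_notMem_of_nonneg (hc0 p hp) (fun h => hsingle p (h ▸ hcK p hp)) (hcp p hp)
      (hcq p hp)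
  have hinj : Set.InjOn o P := by
    intro p hp q hq hpq
    by_contra hne
    have hinf : c p ⊓ c q = 0 :=
      hP.prop _ (inf_mem_of_forall_posPart_mem hK (hcK p hp) (hcK q hq)) fun j hj => by
        rcases eq_or_ne j p with rfl | hjp
        · simpa [hcq q hq j (Finset.mem_erase.2 ⟨hne, hj⟩)] using hc0 j hp j
        · simpa [hcq p hp j (Finset.mem_erase.2 ⟨hjp, hj⟩)] using hc0 q hq j
    have := congrFun hinf (o p)
    simp only [Pi.inf_apply, Pi.zero_apply] at this
    exact (lt_min (hco p hp) (hpq ▸ hco q hq)).ne' this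
  have hcard : P.card ≤ Pᶜ.card :=
    Finset.card_le_card_of_injOn o (fun p hp => Finset.mem_compl.2 (hoP p hp)) hinj
  have := finrank_le_card_of_isDeterminingSet hP.prop
  rw [Finset.card_compl] at hcard
  omega

end VectorSublattice

lemma pairR_sum_smul_left {n : ℕ} {ι : Type*} (s : Finset ι) (b : ι → ℝ) (v : ι → Fin n → ℝ)
    (u : Fin n → ℝ) : pairR (∑ i ∈ s, b i • v i) u = ∑ i ∈ s, b i * pairR (v i) u := by
  simp only [pairR, Finset.sum_apply, Pi.smul_apply, smul_eq_mul, Finset.sum_mul, Finset.mul_sum,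
    mul_assoc]
  exact Finset.sum_comm

lemma isLinearMap_pairR {n : ℕ} (x : Fin n → ℝ) : IsLinearMap ℝ (pairR x) :=
  ⟨dotProduct_add x, fun c y => dotProduct_smul c x y⟩

lemma IsLatticePt.exists_pairR_eq_intCast {n : ℕ} {x y : Fin n → ℝ} (hx : IsLatticePt x)
    (hy : IsLatticePt y) : ∃ m : ℤ, pairR x y = m := by
  choose mx hmx using hx
  choose my hmy using hy
  exact ⟨∑ k, mx k * my k, by simp [pairR, hmx, hmy]⟩

lemma IsLatticePoly.exists_latticePt_ne_zero {n : ℕ} {P : Set (Fin n → ℝ)} (hP : IsLatticePoly P)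
    (hdim : 0 < polyDim P) : ∃ v, IsLatticePt v ∧ v ∈ P ∧ v ≠ 0 := by
  obtain ⟨V, -, hVL, rfl⟩ := hP
  by_contra! hV
  have hsub : convexHull ℝ (V : Set (Fin n → ℝ)) ⊆ {0} :=
    convexHull_min (fun v hv => hV v (hVL v hv) (subset_convexHull ℝ _ hv)) (convex_singleton 0)
  have hbot : (affineSpan ℝ (convexHull ℝ (V : Set (Fin n → ℝ)))).direction = ⊥ := by
    rw [direction_affineSpan, vectorSpan_eq_bot_iff_subsingleton]
    exact Set.subsingleton_singleton.anti hsub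
  rw [polyDim, hbot, finrank_bot] at hdim
  exact hdim.false

lemma exists_mem_dualPoly_pairR_lt_neg_one {n : ℕ} {P : Set (Fin n → ℝ)} (hconv : Convex ℝ P)
    (hclosed : IsClosed P) (h0 : 0 ∈ P) {x : Fin n → ℝ} (hx : x ∉ P) :
    ∃ y ∈ dualPoly P, pairR x y < -1 := by
  obtain ⟨f, u, hfP, hfx⟩ := geometric_hahn_banach_closed_point hconv hclosed hx
  have hu : 0 < u := by simpa using hfP 0 h0
  let y : Fin n → ℝ := fun k => -u⁻¹ * f fun j => if k = j then 1 else 0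
  have hy : ∀ z, pairR z y = -u⁻¹ * f z := fun z => by
    have hf : f z = ∑ k, z k * f fun j => if k = j then 1 else 0 := by
      simpa using (f : (Fin n → ℝ) →ₗ[ℝ] ℝ).pi_apply_eq_sum_univ z
    rw [hf, Finset.mul_sum]
    exact Finset.sum_congr rfl fun k _ => by ring
  refine ⟨y, fun z hz => ?_, ?_⟩
  · rw [hy, neg_mul, neg_le_neg_iff, inv_mul_le_iff₀ hu]
    linarith [hfP z hz]
  · rw [hy, neg_mul, neg_lt_neg_iff, lt_inv_mul_iff₀ hu]
    linarith

lemma mem_of_forall_neg_one_le_pairR {n : ℕ} {P W : Set (Fin n → ℝ)} (hconv : Convex ℝ P)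
    (hclosed : IsClosed P) (h0 : 0 ∈ P) (hW : dualPoly P ⊆ convexHull ℝ W) {x : Fin n → ℝ}
    (hx : ∀ u ∈ W, -1 ≤ pairR x u) : x ∈ P := by
  by_contra hxP
  obtain ⟨y, hy, hxy⟩ := exists_mem_dualPoly_pairR_lt_neg_one hconv hclosed h0 hxP
  have hhull : convexHull ℝ W ⊆ {y | -1 ≤ pairR x y} :=
    convexHull_min hx (convex_halfSpace_ge (isLinearMap_pairR x) (-1))
  exact (hhull (hW hy)).not_gt hxy

lemma eq_zero_of_forall_nonneg_smul_mem {E : Type*} [NormedAddCommGroup E] [NormedSpace ℝ E]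
    {s : Set E} (hs : Bornology.IsBounded s) {w : E} (hw : ∀ t : ℝ, 0 ≤ t → t • w ∈ s) :
    w = 0 := by
  obtain ⟨R, hR⟩ := hs.exists_norm_le
  by_contra hne
  have hpos : 0 < ‖w‖ := norm_pos_iff.2 hne
  have := hR _ (hw ((|R| + 1) / ‖w‖) (by positivity))
  rw [norm_smul, Real.norm_of_nonneg (by positivity), div_mul_cancel₀ _ hpos.ne'] at this
  linarith [le_abs_self R]

lemma eq_zero_of_forall_nonneg_pairR {n : ℕ} {P W : Set (Fin n → ℝ)} (hconv : Convex ℝ P)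
    (hcpt : IsCompact P) (h0 : 0 ∈ P) (hW : dualPoly P ⊆ convexHull ℝ W) {w : Fin n → ℝ}
    (hw : ∀ u ∈ W, 0 ≤ pairR w u) : w = 0 :=
  eq_zero_of_forall_nonneg_smul_mem hcpt.isBounded fun t ht =>
    mem_of_forall_neg_one_le_pairR hconv hcpt.isClosed h0 hW fun u hu => by
      have : pairR (t • w) u = t * pairR w u := smul_dotProduct t w u
      nlinarith [hw u hu]

lemma add_mem_minkSum {n r : ℕ} {Δ : Fin r → Set (Fin n → ℝ)} (h0 : ∀ k, 0 ∈ Δ k) {i j : Fin r}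
    (hij : i ≠ j) {x y : Fin n → ℝ} (hx : x ∈ Δ i) (hy : y ∈ Δ j) : x + y ∈ minkSum Δ := by
  refine ⟨Pi.single i x + Pi.single j y, fun k => ?_, by simp [Finset.sum_add_distrib]⟩
  rcases eq_or_ne k i with rfl | hki
  · simpa [hij] using hx
  rcases eq_or_ne k j with rfl | hkj
  · simpa [hki] using hy
  · simpa [hki, hkj] using h0 k

lemma pairR_nonneg_of_pairR_neg {n r : ℕ} {Δ : Fin r → Set (Fin n → ℝ)} (h0 : ∀ k, 0 ∈ Δ k)
    {u : Fin n → ℝ} (hu : IsLatticePt u) (hudual : u ∈ dualPoly (minkSum Δ)) {i j : Fin r}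
    (hij : i ≠ j) {x y : Fin n → ℝ} (hx : IsLatticePt x) (hxΔ : x ∈ Δ i) (hy : IsLatticePt y)
    (hyΔ : y ∈ Δ j) (hxu : pairR x u < 0) : 0 ≤ pairR y u := by
  obtain ⟨mx, hmx⟩ := hx.exists_pairR_eq_intCast hu
  obtain ⟨my, hmy⟩ := hy.exists_pairR_eq_intCast hu
  have hsum : -1 ≤ pairR x u + pairR y u := by
    simpa [pairR, add_mul, Finset.sum_add_distrib] using hudual _ (add_mem_minkSum h0 hij hxΔ hyΔ)
  rw [hmx] at hsum hxu
  rw [hmy] at hsum ⊢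
  have : (-1 : ℤ) ≤ mx + my := by exact_mod_cast hsum
  have : mx < 0 := by exact_mod_cast hxu
  exact_mod_cast (by omega : 0 ≤ my)

theorem sum_posPart_smul_eq_zero {d r : ℕ} {Δ : Fin r → Set (Fin d → ℝ)}
    (hΔ : IsCenteredNefPartition Δ) {v : Fin r → Fin d → ℝ} (hvL : ∀ i, IsLatticePt (v i))
    (hvΔ : ∀ i, v i ∈ Δ i) {a : Fin r → ℝ} (ha : ∑ i, a i • v i = 0) :
    ∑ i, (a i)⁺ • v i = 0 := by
  obtain ⟨hΔi, ⟨⟨T, -, -, hT⟩, h0int, ⟨W, -, hWL, hW⟩⟩, -⟩ := hΔ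
  have hparts : ∑ i, (a i)⁺ • v i = ∑ i, (a i)⁻ • v i := by
    rw [← sub_eq_zero, ← Finset.sum_sub_distrib, ← ha]
    simp_rw [← sub_smul, posPart_sub_negPart]
  refine eq_zero_of_forall_nonneg_pairR (hT ▸ convex_convexHull ℝ _)
    (hT ▸ T.finite_toSet.isCompact_convexHull ℝ) (interior_subset h0int) hW.subset fun u hu => ?_
  have hterm : ∀ b : Fin r → ℝ, 0 ≤ b → (∀ i, b i = 0 ∨ 0 ≤ pairR (v i) u) →
      0 ≤ pairR (∑ i, b i • v i) u := fun b hb hbv => by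
    rw [pairR_sum_smul_left]
    refine Finset.sum_nonneg fun i _ => ?_
    rcases hbv i with hbi | hvi
    · simp [hbi]
    · exact mul_nonneg (hb i) hvi
  by_cases hall : ∀ i, 0 ≤ pairR (v i) u
  · exact hterm _ (fun i => posPart_nonneg _) fun i => .inr (hall i)
  push Not at hall
  obtain ⟨i₀, hi₀⟩ := hall
  have hud : u ∈ dualPoly (minkSum Δ) := hW ▸ subset_convexHull ℝ _ hu
  have hother : ∀ b : Fin r → ℝ, b i₀ = 0 → ∀ i, b i = 0 ∨ 0 ≤ pairR (v i) u := fun b hb i =>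
    (eq_or_ne i i₀).imp (fun hi => by rw [hi]; exact hb) fun hi =>
      pairR_nonneg_of_pairR_neg (fun k => (hΔi k).2) (hWL u hu) hud (Ne.symm hi) (hvL i₀)
        (hvΔ i₀) (hvL i) (hvΔ i) hi₀
  rcases le_or_gt (a i₀) 0 with hle | hlt
  · exact hterm _ (fun i => posPart_nonneg _) (hother _ (posPart_eq_zero.2 hle))
  · rw [hparts]
    exact hterm _ (fun i => negPart_nonneg _) (hother _ (negPart_eq_zero.2 hlt.le))

/-- A centered proper nef-partition in `ℝ^d` has length `r ≤ 2d`. -/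
theorem proper_nef_partition_length_le {d r : ℕ}
    (Δ : Fin r → Set (Fin d → ℝ))
    (h : IsCenteredNefPartition Δ)
    (hproper : ∀ i, 0 < polyDim (Δ i)) :
    r ≤ 2 * d := by
  choose v hvL hvΔ hv0 using fun i => (h.1 i).1.exists_latticePt_ne_zero (hproper i)
  let L := Fintype.linearCombination ℝ v
  have hpos : ∀ a ∈ LinearMap.ker L, a⁺ ∈ LinearMap.ker L := fun a ha =>
    sum_posPart_smul_eq_zero h hvL hvΔ ha
  have hsingle : ∀ i, Pi.single i 1 ∉ LinearMap.ker L := by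
    simpa [L, Fintype.linearCombination_apply_single] using hv0
  have hker := two_mul_finrank_le_card_of_forall_posPart_mem hpos hsingle
  have hrange : Module.finrank ℝ (LinearMap.range L) ≤ d :=
    (Submodule.finrank_le _).trans_eq (Module.finrank_fin_fun ℝ)
  have := L.finrank_range_add_finrank_ker
  rw [Module.finrank_fin_fun] at this
  simp only [Fintype.card_fin] at hker
  omega
end
end
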